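/- Free groups have unique roots: if a^m = b^m in a free group for some nonzero integer m, then a = b. -/

import Mathlib

/-!
The subgroup `H` generated by `a` and `b` is free by Nielsen–Schreier. Since `a ^ m = b ^ m` and
the abelianization `Generators H →₀ ℤ` of `H` is torsion-free, `a` and `b` have the same image
there, so this image generates it. A free abelian group with two or more basis vectors is not
cyclic, hence `H` has at most one generator and is commutative. Commuting elements of the
torsion-free group `FreeGroup α` with equal `m`-th powers are equal.
-/

open Subgroup

theorem Commute.eq_of_zpow_eq {G : Type*} [Group G] [IsMulTorsionFree G] {a b : G}
    (hab : Commute a b) {m : ℤ} (hm : m ≠ 0) (h : a ^ m = b ^ m) : a = b := by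
  have : (a * b⁻¹) ^ m = 1 := by
    rw [hab.inv_right.mul_zpow, inv_zpow, h, mul_inv_cancel]
  exact mul_inv_eq_one.mp ((IsMulTorsionFree.zpow_eq_one_iff_left hm).mp this)

theorem Finsupp.subsingleton_of_single_one_mem_zmultiples {ι : Type*} (v : ι →₀ ℤ)
    (h : ∀ i, Finsupp.single i 1 ∈ AddSubgroup.zmultiples v) : Subsingleton ι := by
  refine ⟨fun s t => by_contra fun hst => ?_⟩
  obtain ⟨n, hn⟩ := h s
  obtain ⟨k, hk⟩ := h t
  have hns : n * v s = 1 := by simpa using congrArg (· s) hn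
  have hks : k * v s = 0 := by simpa [Finsupp.single_apply, Ne.symm hst] using congrArg (· s) hk
  have hkt : k * v t = 1 := by simpa using congrArg (· t) hk
  have hk0 : k = 0 := (mul_eq_zero.mp hks).resolve_right (right_ne_zero_of_mul_eq_one hns)
  simp [hk0] at hkt

theorem FreeGroup.commute_of_subsingleton {ι : Type*} [Subsingleton ι] (x y : FreeGroup ι) :
    Commute x y := by
  have hcomm : IsMulCommutative (closure (Set.range (FreeGroup.of : ι → FreeGroup ι))) :=
    isMulCommutative_closure <| by
      rintro _ ⟨i, rfl⟩ _ ⟨j, rfl⟩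
      rw [Subsingleton.elim i j]
  have hx : x ∈ closure (Set.range FreeGroup.of) := FreeGroup.closure_range_of ι ▸ mem_top x
  have hy : y ∈ closure (Set.range FreeGroup.of) := FreeGroup.closure_range_of ι ▸ mem_top y
  exact congrArg Subtype.val (hcomm.is_comm.comm ⟨x, hx⟩ ⟨y, hy⟩)

namespace IsFreeGroup

variable {G : Type*} [Group G] [IsFreeGroup G]

theorem commute_of_subsingleton_generators [Subsingleton (Generators G)] (x y : G) :
    Commute x y := by
  simpa using (FreeGroup.commute_of_subsingleton (toFreeGroup G x) (toFreeGroup G y)).map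
    (toFreeGroup G).symm

noncomputable def exponentSum : G →* Multiplicative (Generators G →₀ ℤ) :=
  lift fun i => .ofAdd (Finsupp.single i 1)

theorem subsingleton_generators_of_exponentSum_eq {S : Set G} (hS : closure S = ⊤)
    (g : Multiplicative (Generators G →₀ ℤ)) (hg : ∀ x ∈ S, exponentSum x = g) :
    Subsingleton (Generators G) := by
  have hrange : ∀ y : G, exponentSum y ∈ zpowers g := by
    intro y
    have : exponentSum y ∈ (closure S).map exponentSum := mem_map_of_mem _ (hS ▸ mem_top y)
    rw [MonoidHom.map_closure] at this
    refine closure_le _ |>.mpr ?_ this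
    rintro _ ⟨x, hx, rfl⟩
    rw [hg x hx]
    exact mem_zpowers g
  refine Finsupp.subsingleton_of_single_one_mem_zmultiples g.toAdd fun i => ?_
  obtain ⟨n, hn⟩ := mem_zpowers_iff.mp (hrange (of i))
  rw [exponentSum, lift_of] at hn
  exact ⟨n, by simpa [← toAdd_zpow] using congrArg Multiplicative.toAdd hn⟩

end IsFreeGroup

theorem free_group_unique_roots {α : Type*}
    (a b : FreeGroup α) (m : ℤ) (hm : m ≠ 0) (h : a ^ m = b ^ m) :
    a = b := by
  set H := closure ({a, b} : Set (FreeGroup α))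
  set S : Set H := (↑) ⁻¹' {a, b}
  let a' : H := ⟨a, subset_closure (by simp)⟩
  have hpow : ∀ x ∈ S, x ^ m = a' ^ m := by
    rintro x (hx | hx) <;> apply Subtype.ext <;> simp_all [a']
  -- `IsFreeGroup H` is Mathlib's Nielsen–Schreier instance `subgroupIsFreeOfIsFree`.
  have hS : ∀ x ∈ S, IsFreeGroup.exponentSum x = IsFreeGroup.exponentSum a' := fun x hx =>
    zpow_left_injective hm (by simp only [← map_zpow, hpow x hx])
  have := IsFreeGroup.subsingleton_generators_of_exponentSum_eq closure_closure_coe_preimage _ hS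
  have hab : Commute a b :=
    congrArg Subtype.val
      (IsFreeGroup.commute_of_subsingleton_generators a' ⟨b, subset_closure (by simp)⟩)
  exact hab.eq_of_zpow_eq hm h
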